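/- Let φ, h ∈ H^∞(𝔻) and (p_n) a sequence of polynomials. Then p_n(φ) → h in the weak-star topology of H^∞(𝔻) (i.e., sup_n ‖p_n(φ)‖_∞ < ∞ and p_n(φ(a)) → h(a) for all a ∈ 𝔻) if and only if p_n(M_φ) → M_h in the weak operator topology on H²(𝔻). -/

import Mathlib

/-!
The Szegő kernels `k_a = (conj a ^ n)ₙ`, `a ∈ 𝔻`, reproduce point evaluation, `⟪k_a, f⟫ = f(a)`,
so `⟪M_ψ f, k_a⟫ = conj (ψ a) ⟪f, k_a⟫`, and since `p(M_φ) = M_{p ∘ φ}` testing against `k_a`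
turns weak operator convergence into pointwise convergence of `p_n ∘ φ`. The kernels span a dense
subspace, and the uniform bounds match because `‖M_ψ‖ = sup_𝔻 |ψ|`: testing `M_ψ` on `k_a` gives
`|ψ(a)| ≤ ‖M_ψ‖`, while Parseval on the circle `|z| = r` gives `‖(M_ψ f)_r‖ ≤ sup |ψ| ‖f_r‖`,
and `‖f_r‖ → ‖f‖` as `r → 1`. Finally, WOT-convergent sequences are bounded by uniform boundedness,
and a bounded sequence that converges weakly on a dense set converges weakly everywhere.
-/

noncomputable section
open Complex Filter Topology

/-- The Hardy space `H²(𝔻)`, modelled as the Hilbert space of square-summable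
Taylor coefficient sequences. -/
abbrev H2 : Type := lp (fun _ : ℕ => ℂ) 2

/-- The open unit disk `𝔻`. -/
def unitDisk : Set ℂ := Metric.ball 0 1

/-- Evaluation of an element of `H²(𝔻)` at a point of the disk, via its Taylor series. -/
def ev (f : H2) (a : ℂ) : ℂ := ∑' n, f n * a ^ n

/-- `φ ∈ H^∞(𝔻)`: bounded analytic function on the unit disk. -/
def Hinf (φ : ℂ → ℂ) : Prop :=
  DifferentiableOn ℂ φ unitDisk ∧ ∃ C : ℝ, ∀ z ∈ unitDisk, ‖φ z‖ ≤ C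

/-- `M` is the analytic Toeplitz (multiplication) operator `M_φ` with symbol `φ`. -/
def IsMulOp (φ : ℂ → ℂ) (M : H2 →L[ℂ] H2) : Prop :=
  ∀ (f : H2), ∀ a ∈ unitDisk, ev (M f) a = φ a * ev f a

open MeasureTheory AddCircle
open scoped InnerProductSpace ComplexConjugate

section InnerProductSpace

variable {𝕜 E F ι : Type*} [RCLike 𝕜] [NormedAddCommGroup E] [InnerProductSpace 𝕜 E]

theorem Orthonormal.hasSum_norm_sq {e : ι → E} (he : Orthonormal 𝕜 e) {c : ι → 𝕜} {x : E}
    (hx : HasSum (fun i => c i • e i) x) : HasSum (fun i => ‖c i‖ ^ 2) (‖x‖ ^ 2) :=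
  (hx.norm.pow 2).congr fun s => he.orthogonalFamily.norm_sum c s

theorem tendsto_inner_of_dense_span {l : Filter ι} {x : ι → E} {y : E} {B : ℝ}
    (hB : ∀ i, ‖x i‖ ≤ B) {s : Set E} (hs : Dense (Submodule.span 𝕜 s : Set E))
    (h : ∀ g ∈ s, Tendsto (fun i => ⟪x i, g⟫_𝕜) l (𝓝 ⟪y, g⟫_𝕜)) (g : E) :
    Tendsto (fun i => ⟪x i, g⟫_𝕜) l (𝓝 ⟪y, g⟫_𝕜) := by
  let S : Submodule 𝕜 E :=
    { carrier := {g | Tendsto (fun i => ⟪x i, g⟫_𝕜) l (𝓝 ⟪y, g⟫_𝕜)}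
      zero_mem' := by simpa only [Set.mem_ofPred_eq, inner_zero_right] using tendsto_const_nhds
      add_mem' := fun hg hg' => by
        simpa only [Set.mem_ofPred_eq, inner_add_right] using hg.add hg'
      smul_mem' := fun c g hg => by
        simpa only [Set.mem_ofPred_eq, inner_smul_right] using hg.const_mul c }
  have hbdd : ∃ C, ∀ i, ‖innerSL 𝕜 (x i)‖ ≤ C :=
    ⟨B, fun i => (innerSL_apply_norm 𝕜 (x i)).trans_le (hB i)⟩
  have hequi : Equicontinuous fun i => (innerSL 𝕜 (x i) : E → 𝕜) :=
    ((NormedSpace.equicontinuous_TFAE fun i => innerSL 𝕜 (x i)).out 5 1).mp hbdd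
  have hclosed : IsClosed (S : Set E) :=
    hequi.isClosed_setOfPred_tendsto (continuous_const.inner continuous_id)
  exact hclosed.closure_subset_iff.2 (Submodule.span_le.2 h) (hs g)

variable [NormedAddCommGroup F] [InnerProductSpace 𝕜 F]

theorem exists_norm_le_of_tendsto_inner [CompleteSpace E] [CompleteSpace F]
    {T : ℕ → E →L[𝕜] F} {L : E → F → 𝕜}
    (h : ∀ f g, Tendsto (fun n => ⟪T n f, g⟫_𝕜) atTop (𝓝 (L f g))) : ∃ C, ∀ n, ‖T n‖ ≤ C := by
  refine banach_steinhaus fun f => ?_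
  have hbdd : ∀ g, ∃ C, ∀ n, ‖innerSL 𝕜 (T n f) g‖ ≤ C := fun g => by
    obtain ⟨C, hC⟩ := (h f g).norm.bddAbove_range
    exact ⟨C, fun n => hC ⟨n, rfl⟩⟩
  obtain ⟨C, hC⟩ := banach_steinhaus hbdd
  exact ⟨C, fun n => (innerSL_apply_norm 𝕜 (T n f)).symm.trans_le (hC n)⟩

end InnerProductSpace

theorem lp.hasSum_norm_sq {α : Type*} {E : α → Type*} [∀ i, NormedAddCommGroup (E i)]
    (f : lp E 2) : HasSum (fun i => ‖f i‖ ^ 2) (‖f‖ ^ 2) := by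
  simpa using lp.hasSum_norm (p := 2) (by norm_num) f

lemma mem_unitDisk_iff {a : ℂ} : a ∈ unitDisk ↔ ‖a‖ < 1 := mem_ball_zero_iff

lemma memℓp_conj_pow {a : ℂ} (ha : a ∈ unitDisk) : Memℓp (fun n : ℕ => conj a ^ n) 2 := by
  have ha' : ‖a‖ ^ 2 < 1 := by nlinarith [mem_unitDisk_iff.1 ha, norm_nonneg a]
  have hsum : Summable fun n : ℕ => (‖a‖ ^ 2) ^ n :=
    summable_geometric_of_lt_one (by positivity) ha'
  refine memℓp_gen (hsum.congr fun n => ?_)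
  simp [← pow_mul, mul_comm]

def szegoKernel (a : ℂ) (ha : a ∈ unitDisk) : H2 := ⟨fun n => conj a ^ n, memℓp_conj_pow ha⟩

lemma ev_eq_inner_szegoKernel (f : H2) {a : ℂ} (ha : a ∈ unitDisk) :
    ev f a = ⟪szegoKernel a ha, f⟫_ℂ := by
  rw [lp.inner_eq_tsum, ev]
  congr 1 with n
  simp [szegoKernel, mul_comm]

lemma inner_single_zero_szegoKernel {a : ℂ} (ha : a ∈ unitDisk) :
    ⟪(lp.single 2 0 1 : H2), szegoKernel a ha⟫_ℂ = 1 := by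
  simp [lp.inner_single_left, szegoKernel]

lemma one_le_norm_szegoKernel {a : ℂ} (ha : a ∈ unitDisk) : 1 ≤ ‖szegoKernel a ha‖ := by
  simpa [szegoKernel] using lp.norm_apply_le_norm two_ne_zero (szegoKernel a ha) 0

lemma IsMulOp.inner_szegoKernel_right {ψ : ℂ → ℂ} {M : H2 →L[ℂ] H2} (hM : IsMulOp ψ M) (f : H2)
    {a : ℂ} (ha : a ∈ unitDisk) :
    ⟪szegoKernel a ha, M f⟫_ℂ = ψ a * ⟪szegoKernel a ha, f⟫_ℂ := by
  rw [← ev_eq_inner_szegoKernel, ← ev_eq_inner_szegoKernel, hM f a ha]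

lemma IsMulOp.inner_szegoKernel_left {ψ : ℂ → ℂ} {M : H2 →L[ℂ] H2} (hM : IsMulOp ψ M) (f : H2)
    {a : ℂ} (ha : a ∈ unitDisk) :
    ⟪M f, szegoKernel a ha⟫_ℂ = conj (ψ a) * ⟪f, szegoKernel a ha⟫_ℂ := by
  rw [← inner_conj_symm, hM.inner_szegoKernel_right f ha, map_mul, inner_conj_symm]

lemma IsMulOp.norm_le_opNorm {ψ : ℂ → ℂ} {M : H2 →L[ℂ] H2} (hM : IsMulOp ψ M) {a : ℂ}
    (ha : a ∈ unitDisk) : ‖ψ a‖ ≤ ‖M‖ := by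
  set k := szegoKernel a ha
  have hk : 0 < ‖k‖ ^ 2 := by have := one_le_norm_szegoKernel ha; positivity
  refine le_of_mul_le_mul_right ?_ hk
  calc ‖ψ a‖ * ‖k‖ ^ 2 = ‖⟪k, M k⟫_ℂ‖ := by
        rw [hM.inner_szegoKernel_right k ha, inner_self_eq_norm_sq_to_K, norm_mul, norm_pow,
          RCLike.norm_ofReal, abs_norm]
    _ ≤ ‖k‖ * ‖M k‖ := norm_inner_le_norm k (M k)
    _ ≤ ‖M‖ * ‖k‖ ^ 2 := by nlinarith [M.le_opNorm k, norm_nonneg k]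

section IsMulOp

variable {φ ψ : ℂ → ℂ} {M N : H2 →L[ℂ] H2}

lemma IsMulOp.add (hM : IsMulOp φ M) (hN : IsMulOp ψ N) :
    IsMulOp (fun z => φ z + ψ z) (M + N) := by
  intro f a ha
  rw [add_apply, ev_eq_inner_szegoKernel _ ha, inner_add_right, hM.inner_szegoKernel_right f ha,
    hN.inner_szegoKernel_right f ha, ev_eq_inner_szegoKernel _ ha]
  ring

lemma IsMulOp.mul (hM : IsMulOp φ M) (hN : IsMulOp ψ N) :
    IsMulOp (fun z => φ z * ψ z) (M * N) := by
  intro f a ha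
  rw [mul_apply_eq_comp, hM _ a ha, hN f a ha, mul_assoc]

lemma isMulOp_algebraMap (c : ℂ) : IsMulOp (fun _ => c) (algebraMap ℂ (H2 →L[ℂ] H2) c) := by
  intro f a ha
  rw [Algebra.algebraMap_eq_smul_one, smul_apply, one_apply_eq_self,
    ev_eq_inner_szegoKernel _ ha, ev_eq_inner_szegoKernel _ ha, inner_smul_right]

lemma IsMulOp.aeval (hM : IsMulOp φ M) (q : Polynomial ℂ) :
    IsMulOp (fun z => q.eval (φ z)) (Polynomial.aeval M q) := by
  induction q using Polynomial.induction_on with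
  | C c => simpa using isMulOp_algebraMap c
  | add p q hp hq => simpa using hp.add hq
  | monomial n c ih =>
    simpa [pow_succ, ← mul_assoc] using ih.mul hM

end IsMulOp

lemma summable_norm_coeff_mul_pow (f : H2) {z : ℂ} (hz : ‖z‖ < 1) :
    Summable fun n => ‖f n * z ^ n‖ := by
  refine .of_nonneg_of_le (fun n => norm_nonneg _) (fun n => ?_)
    ((summable_geometric_of_lt_one (norm_nonneg z) hz).mul_left ‖f‖)
  rw [norm_mul, norm_pow]
  gcongr
  exact lp.norm_apply_le_norm two_ne_zero f n

section Circle

local instance : Fact ((0 : ℝ) < 1) := ⟨one_pos⟩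

lemma fourier_natCast_eq_pow (n : ℕ) (x : AddCircle (1 : ℝ)) :
    fourier (n : ℤ) x = fourier 1 x ^ n := by
  rw [fourier_apply, natCast_zsmul, toCircle_nsmul, fourier_one, Circle.coe_pow]

lemma norm_fourier_one_apply (x : AddCircle (1 : ℝ)) : ‖fourier 1 x‖ = 1 := by
  rw [fourier_apply, Circle.norm_coe]

lemma ofReal_mul_fourier_one_mem_unitDisk {r : ℝ} (hr : |r| < 1) (x : AddCircle (1 : ℝ)) :
    (r : ℂ) * fourier 1 x ∈ unitDisk := by
  rwa [mem_unitDisk_iff, norm_mul, norm_fourier_one_apply, mul_one, Complex.norm_real]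

def dilationLp (f : H2) (r : ℝ) : Lp ℂ 2 (haarAddCircle (T := 1)) :=
  ContinuousMap.toLp 2 haarAddCircle ℂ (∑' n : ℕ, (f n * (r : ℂ) ^ n) • fourier (T := 1) n)

variable {r : ℝ}

lemma summable_coeff_smul_fourier (f : H2) (hr : |r| < 1) :
    Summable fun n : ℕ => (f n * (r : ℂ) ^ n) • fourier (T := 1) n := by
  refine .of_norm ((summable_norm_coeff_mul_pow f (z := r) (by simpa using hr)).congr fun n => ?_)
  rw [norm_smul, fourier_norm, mul_one]

lemma hasSum_dilationLp (f : H2) (hr : |r| < 1) :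
    HasSum (fun n : ℕ => (f n * (r : ℂ) ^ n) • fourierLp 2 (n : ℤ)) (dilationLp f r) := by
  simpa only [map_smul, fourierLp, dilationLp] using
    (ContinuousMap.toLp 2 haarAddCircle ℂ).hasSum (summable_coeff_smul_fourier f hr).hasSum

lemma hasSum_norm_sq_dilationLp (f : H2) (hr : |r| < 1) :
    HasSum (fun n : ℕ => ‖f n * (r : ℂ) ^ n‖ ^ 2) (‖dilationLp f r‖ ^ 2) :=
  (orthonormal_fourier.comp _ Nat.cast_injective).hasSum_norm_sq (hasSum_dilationLp f hr)

lemma dilationLp_ae_eq (f : H2) (hr : |r| < 1) :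
    dilationLp f r =ᵐ[haarAddCircle] fun x => ev f (r * fourier 1 x) := by
  filter_upwards [ContinuousMap.coeFn_toLp (p := 2) (𝕜 := ℂ) haarAddCircle
    (∑' n : ℕ, (f n * (r : ℂ) ^ n) • fourier (T := 1) n)] with x hx
  rw [dilationLp, hx, ev]
  refine ((ContinuousMap.evalCLM ℂ x).hasSum
    (summable_coeff_smul_fourier f hr).hasSum).tsum_eq.symm.trans ?_
  congr 1 with n
  change f n * (r : ℂ) ^ n * fourier (n : ℤ) x = f n * (r * fourier 1 x) ^ n
  rw [fourier_natCast_eq_pow]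
  ring

lemma norm_dilationLp_le (f : H2) (hr : |r| < 1) : ‖dilationLp f r‖ ≤ ‖f‖ := by
  refine (pow_le_pow_iff_left₀ (norm_nonneg _) (norm_nonneg f) two_ne_zero).1 ?_
  refine hasSum_le (fun n => ?_) (hasSum_norm_sq_dilationLp f hr) (lp.hasSum_norm_sq f)
  rw [norm_mul, norm_pow, Complex.norm_real, Real.norm_eq_abs]
  gcongr
  exact mul_le_of_le_one_right (norm_nonneg _) (pow_le_one₀ (abs_nonneg r) hr.le)

lemma norm_le_of_forall_norm_dilationLp_le {g : H2} {B : ℝ}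
    (hB : ∀ r : ℝ, |r| < 1 → ‖dilationLp g r‖ ≤ B) : ‖g‖ ≤ B := by
  have hB0 : 0 ≤ B := (norm_nonneg _).trans (hB 0 (by norm_num))
  refine (pow_le_pow_iff_left₀ (norm_nonneg g) hB0 two_ne_zero).1 ?_
  refine hasSum_le_of_sum_le (lp.hasSum_norm_sq g) fun s => ?_
  have hlim : Tendsto (fun r : ℝ => ∑ n ∈ s, ‖g n * (r : ℂ) ^ n‖ ^ 2) (𝓝[<] 1)
      (𝓝 (∑ n ∈ s, ‖g n‖ ^ 2)) := by
    have hcont : Continuous fun r : ℝ => ∑ n ∈ s, ‖g n * (r : ℂ) ^ n‖ ^ 2 := by fun_prop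
    simpa using (hcont.tendsto 1).mono_left nhdsWithin_le_nhds
  have hnear : Set.Ioo (-1 : ℝ) 1 ∈ 𝓝[<] 1 := Ioo_mem_nhdsLT (by norm_num)
  refine le_of_tendsto hlim (eventually_of_mem hnear fun r hr => ?_)
  have hr' : |r| < 1 := abs_lt.2 hr
  calc ∑ n ∈ s, ‖g n * (r : ℂ) ^ n‖ ^ 2 ≤ ‖dilationLp g r‖ ^ 2 :=
        sum_le_hasSum s (fun _ _ => by positivity) (hasSum_norm_sq_dilationLp g hr')
    _ ≤ B ^ 2 := by gcongr; exact hB r hr'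

end Circle

lemma IsMulOp.opNorm_le {ψ : ℂ → ℂ} {M : H2 →L[ℂ] H2} (hM : IsMulOp ψ M) {C : ℝ}
    (hC : ∀ z ∈ unitDisk, ‖ψ z‖ ≤ C) : ‖M‖ ≤ C := by
  have hC0 : 0 ≤ C := (norm_nonneg _).trans (hC 0 (Metric.mem_ball_self one_pos))
  refine M.opNorm_le_bound hC0 fun f => norm_le_of_forall_norm_dilationLp_le fun r hr => ?_
  calc ‖dilationLp (M f) r‖ ≤ C * ‖dilationLp f r‖ := by
        refine Lp.norm_le_mul_norm_of_ae_le_mul ?_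
        filter_upwards [dilationLp_ae_eq (M f) hr, dilationLp_ae_eq f hr] with x hMf hf
        rw [hMf, hf, hM f _ (ofReal_mul_fourier_one_mem_unitDisk hr x), norm_mul]
        gcongr
        exact hC _ (ofReal_mul_fourier_one_mem_unitDisk hr x)
    _ ≤ C * ‖f‖ := by gcongr; exact norm_dilationLp_le f hr

lemma dense_span_szegoKernel :
    Dense (Submodule.span ℂ (Set.range fun a : unitDisk => szegoKernel a a.2) : Set H2) := by
  rw [Submodule.dense_iff_topologicalClosure_eq_top, Submodule.topologicalClosure_eq_top_iff,
    Submodule.eq_bot_iff]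
  intro f hf
  have hev : ∀ a ∈ unitDisk, ev f a = 0 := fun a ha => by
    rw [ev_eq_inner_szegoKernel f ha]
    exact hf _ (Submodule.subset_span ⟨⟨a, ha⟩, rfl⟩)
  refine norm_le_zero_iff.1 (norm_le_of_forall_norm_dilationLp_le fun r hr => ?_)
  have hzero : dilationLp f r = 0 := Lp.eq_zero_iff_ae_eq_zero.2 <| (dilationLp_ae_eq f hr).trans
    (.of_forall fun x => hev _ (ofReal_mul_fourier_one_mem_unitDisk hr x))
  rw [hzero, norm_zero]

theorem weakStar_tendsto_iff_wot_tendsto_general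
    (φ h : ℂ → ℂ) (p : ℕ → Polynomial ℂ)
    (Mφ : H2 →L[ℂ] H2) (hMφ : IsMulOp φ Mφ)
    (Mh : H2 →L[ℂ] H2) (hMh : IsMulOp h Mh) :
    ((∃ C : ℝ, ∀ n, ∀ z ∈ unitDisk, ‖(p n).eval (φ z)‖ ≤ C) ∧
        ∀ a ∈ unitDisk, Tendsto (fun n => (p n).eval (φ a)) atTop (𝓝 (h a))) ↔
      ∀ f g : H2, Tendsto (fun n => (inner ℂ ((Polynomial.aeval Mφ (p n) : H2 →L[ℂ] H2) f) g : ℂ))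
        atTop (𝓝 (inner ℂ (Mh f) g : ℂ)) := by
  have hT n : IsMulOp (fun z => (p n).eval (φ z)) (Polynomial.aeval Mφ (p n)) := hMφ.aeval (p n)
  constructor
  · rintro ⟨⟨C, hC⟩, hconv⟩ f
    have hbound n : ‖Polynomial.aeval Mφ (p n) f‖ ≤ C * ‖f‖ :=
      ((Polynomial.aeval Mφ (p n)).le_opNorm f).trans (by gcongr; exact (hT n).opNorm_le (hC n))
    refine tendsto_inner_of_dense_span hbound dense_span_szegoKernel ?_
    rintro _ ⟨⟨a, ha⟩, rfl⟩
    simp only [(hT _).inner_szegoKernel_left f ha, hMh.inner_szegoKernel_left f ha]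
    exact ((hconv a ha).star).mul_const _
  · intro hwot
    obtain ⟨C, hC⟩ := exists_norm_le_of_tendsto_inner hwot
    refine ⟨⟨C, fun n z hz => ((hT n).norm_le_opNorm hz).trans (hC n)⟩, fun a ha => ?_⟩
    have hconj := hwot (lp.single 2 0 1) (szegoKernel a ha)
    simp only [(hT _).inner_szegoKernel_left _ ha, hMh.inner_szegoKernel_left _ ha,
      inner_single_zero_szegoKernel, mul_one] at hconj
    simpa using hconj.star

/-- For `φ, h ∈ H^∞(𝔻)` and polynomials `(p_n)`: `p_n(φ) → h` weak-star in `H^∞(𝔻)`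
(uniformly bounded and pointwise convergent on `𝔻`) if and only if
`p_n(M_φ) → M_h` in the weak operator topology on `H²(𝔻)`. -/
theorem weakStar_tendsto_iff_wot_tendsto
    (φ h : ℂ → ℂ) (hφ : Hinf φ) (hh : Hinf h) (p : ℕ → Polynomial ℂ)
    (Mφ : H2 →L[ℂ] H2) (hMφ : IsMulOp φ Mφ)
    (Mh : H2 →L[ℂ] H2) (hMh : IsMulOp h Mh) :
    ((∃ C : ℝ, ∀ n, ∀ z ∈ unitDisk, ‖(p n).eval (φ z)‖ ≤ C) ∧
        ∀ a ∈ unitDisk, Tendsto (fun n => (p n).eval (φ a)) atTop (𝓝 (h a))) ↔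
      ∀ f g : H2, Tendsto (fun n => (inner ℂ ((Polynomial.aeval Mφ (p n) : H2 →L[ℂ] H2) f) g : ℂ))
        atTop (𝓝 (inner ℂ (Mh f) g : ℂ)) :=
  weakStar_tendsto_iff_wot_tendsto_general φ h p Mφ hMφ Mh hMh
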